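/- Let OPT₂ be the optimum of the integer program P₂ and suppose Λ₁ (greedy by decreasing weight z_i = r_i / min_j b_{i,j}) serves UEs 1,…,y−1 and the LP-relaxation optimum satisfies LP-OPT ≤ value(Λ₁) + Σ over at most |ℬ| fractional UEs of their profits, each bounded by the profit of the |ℬ| most-profitable UEs forming Λ₃. Then value(Λ₁) + value(Λ₃) > OPT₂, and hence the better of Λ₁, Λ₃ achieves at least OPT₂ / 2. -/

import Mathlib

/-- Theorem 1 of the paper, abstracted: if the integer optimum `OPT₂` is bounded by the
LP optimum, the LP optimum is at most the greedy value `v₁` plus the total profit `s` of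
the at most `|ℬ|` fractional UEs, and `s` is strictly less than the value `v₃` of the
`|ℬ|` most profitable UEs, then `v₁ + v₃ > OPT₂`, and the better of Λ₁, Λ₃ achieves at
least `OPT₂ / 2`. -/
theorem stmt_5 (v1 v3 s LPOPT OPT2 : ℝ)
    (h1 : OPT2 ≤ LPOPT) (h2 : LPOPT ≤ v1 + s) (h3 : s < v3) :
    v1 + v3 > OPT2 ∧ max v1 v3 ≥ OPT2 / 2 := by
  have hsum : OPT2 < v1 + v3 := by linarith
  have hmax : v1 + v3 ≤ 2 * max v1 v3 := by linarith [le_max_left v1 v3, le_max_right v1 v3]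
  exact ⟨hsum, by linarith⟩
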